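/- Let M be a module over a ring R such that M decomposes as a (possibly infinite) direct sum of submodules each of whose endomorphism ring is local. Then any two such decompositions of M into direct sums of modules with local endomorphism rings are isomorphic: there is a bijection between the index sets matching summands up to isomorphism (Krull–Schmidt–Remak–Azumaya). -/

import Mathlib

/-!
Let `B` be a summand with local endomorphism ring and `π : M → B` a projection onto it. On a
nonzero `b ∈ B` the identity of `B` agrees with a finite sum `F` of the composites
`B → T j → B`, so `1 - F` is not a unit and, `End B` being local, `F` and then one of its terms is
a unit. If `v ∘ u : B → T j → B` is a unit and `End (T j)` is local, then `u ∘ (v ∘ u)⁻¹ ∘ v` is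
a nonzero idempotent of `End (T j)`, hence `1`; so `v` is an isomorphism and `T j` is again a
complement of `ker π`.

Fix a module `N`. If only finitely many `T j` are isomorphic to `N`, exchange one of them for an
isomorphic `S i`: the complements of `S i` spanned by the other `S`'s and by the other `T`'s are
isomorphic, so induction on the number of `T j ≅ N` shows that there are equally many `S i ≅ N`.
If there are infinitely many, each `S i ≅ N` is matched with some `T j ≅ N` as above, while a
given `T j` is matched only with the finitely many `S i` on which a fixed nonzero element of `T j`
has a nonzero coordinate; so each cardinality is at most `ℵ₀` times the other. Matching the
summands isomorphism class by isomorphism class gives the bijection.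
-/

open Cardinal DirectSum LinearMap

section

universe u v

variable {R : Type*} [Ring R]

theorem IsLocalRing.of_ringEquiv {A B : Type*} [Semiring A] [Semiring B] [IsLocalRing A]
    (e : A ≃+* B) : IsLocalRing B :=
  have : Nontrivial B := e.injective.nontrivial
  .of_isUnit_or_isUnit_of_isUnit_add fun a b h ↦
    (isUnit_or_isUnit_of_isUnit_add (a := e.symm a) (b := e.symm b)
      (by simpa using h.map e.symm)).imp (isUnit_map_iff e.symm a).mp (isUnit_map_iff e.symm b).mp

theorem IsLocalRing.eq_zero_or_eq_one_of_isIdempotentElem {A : Type*} [Ring A] [IsLocalRing A]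
    {p : A} (hp : IsIdempotentElem p) : p = 0 ∨ p = 1 := by
  rcases isUnit_or_isUnit_of_add_one (add_sub_cancel p 1) with h | h
  · exact .inr (h.mul_left_cancel (by rw [hp.eq, mul_one]))
  · exact .inl (h.mul_left_cancel (by rw [sub_mul, one_mul, hp.eq, sub_self, mul_zero]))

theorem Module.nontrivial_of_isLocalRing_end (R : Type*) [Ring R] {N : Type*} [AddCommGroup N]
    [Module R N] [IsLocalRing (Module.End R N)] : Nontrivial N := by
  by_contra h
  rw [not_nontrivial_iff_subsingleton] at h
  exact not_subsingleton (Module.End R N) inferInstance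

theorem LinearEquiv.isLocalRing_end {M N : Type*} [AddCommGroup M] [Module R M] [AddCommGroup N]
    [Module R N] [IsLocalRing (Module.End R M)] (e : M ≃ₗ[R] N) :
    IsLocalRing (Module.End R N) :=
  .of_ringEquiv e.conjRingEquiv

namespace LinearMap

variable {M N A : Type*} [AddCommGroup M] [Module R M] [AddCommGroup N] [Module R N]
  [AddCommGroup A] [Module R A]

theorem bijective_of_isUnit_comp [Nontrivial A] [IsLocalRing (Module.End R N)]
    {u : A →ₗ[R] N} {v : N →ₗ[R] A} (h : IsUnit (v ∘ₗ u : Module.End R A)) :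
    Function.Bijective v := by
  obtain ⟨g, hg⟩ := h.exists_left_inv
  set w := g ∘ₗ v
  have hwu : w ∘ₗ u = id := hg
  have hidem : IsIdempotentElem (u ∘ₗ w : Module.End R N) := by
    change (u ∘ₗ w) ∘ₗ (u ∘ₗ w) = u ∘ₗ w
    rw [comp_assoc, ← comp_assoc w u w, hwu, id_comp]
  rcases IsLocalRing.eq_zero_or_eq_one_of_isIdempotentElem hidem with h0 | h1
  · refine absurd ?_ (one_ne_zero (α := Module.End R A))
    calc (1 : Module.End R A) = (w ∘ₗ u) ∘ₗ (w ∘ₗ u) := by rw [hwu]; rfl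
      _ = w ∘ₗ (u ∘ₗ w) ∘ₗ u := by simp only [comp_assoc]
      _ = 0 := by rw [h0, zero_comp, comp_zero]
  · have hv : v = (v ∘ₗ u) ∘ₗ w := by rw [comp_assoc, h1]; rfl
    rw [hv]
    exact ((Module.End.isUnit_iff _).1 h).comp
      (LinearEquiv.ofLinearMap w u hwu h1 : N ≃ₗ[R] A).bijective

theorem isCompl_ker_of_bijective_comp_subtype (π : M →ₗ[R] N) {C : Submodule R M}
    (h : Function.Bijective (π ∘ₗ C.subtype)) : IsCompl C (ker π) := by
  let e := LinearEquiv.ofBijective _ h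
  simpa [LinearEquiv.ker_comp] using
    isCompl_of_proj (f := e.symm.toLinearMap ∘ₗ π) fun c ↦ e.symm_apply_apply c

end LinearMap

namespace DirectSum.IsInternal

variable {M : Type*} [AddCommGroup M] [Module R M] {ι : Type*} [DecidableEq ι]
  {A : ι → Submodule R M}

noncomputable def proj (h : IsInternal A) (i : ι) : M →ₗ[R] A i :=
  component R ι (fun i ↦ A i) i ∘ₗ
    (LinearEquiv.ofBijective (coeLinearMap A) h).symm.toLinearMap

theorem proj_apply_of_mem (h : IsInternal A) {i : ι} {x : M} (hx : x ∈ A i) :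
    h.proj i x = ⟨x, hx⟩ :=
  h.ofBijective_coeLinearMap_of_mem hx

theorem proj_apply_of_mem_of_ne (h : IsInternal A) {i j : ι} (hij : i ≠ j) {x : M}
    (hx : x ∈ A i) : h.proj j x = 0 :=
  h.ofBijective_coeLinearMap_of_mem_ne hij hx

theorem isCompl_ker_proj (h : IsInternal A) (i : ι) : IsCompl (A i) (ker (h.proj i)) :=
  isCompl_of_proj fun x ↦ h.proj_apply_of_mem x.2

theorem exists_finset_sum_proj (h : IsInternal A) (x : M) :
    ∃ s : Finset ι, (∀ i ∉ s, h.proj i x = 0) ∧ ∑ i ∈ s, (h.proj i x : M) = x := by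
  classical
  set d := (LinearEquiv.ofBijective (coeLinearMap A) h).symm x
  refine ⟨d.support, fun i hi ↦ DFinsupp.notMem_support_iff.mp hi, ?_⟩
  calc ∑ i ∈ d.support, (h.proj i x : M)
      = coeLinearMap A (∑ i ∈ d.support, of (fun i ↦ A i) i (d i)) := by
        simp [map_sum, proj, d, ← apply_eq_component]
    _ = x := by
        rw [sum_support_of]
        exact (LinearEquiv.ofBijective (coeLinearMap A) h).apply_symm_apply x

theorem ker_proj (h : IsInternal A) (i : ι) :
    ker (h.proj i) = ⨆ j ∈ ({i}ᶜ : Set ι), A j := by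
  refine le_antisymm (fun x hx ↦ ?_)
    (iSup₂_le fun j hj y hy ↦ h.proj_apply_of_mem_of_ne hj hy)
  obtain ⟨s, -, hs⟩ := h.exists_finset_sum_proj x
  rw [← hs]
  refine Submodule.sum_mem _ fun j _ ↦ ?_
  by_cases hj : j = i
  · rw [hj, mem_ker.1 hx, Submodule.coe_zero]
    exact zero_mem _
  · exact Submodule.mem_iSup_of_mem j (Submodule.mem_iSup_of_mem hj (h.proj j x).2)

theorem finite_setOf_injective_proj_comp_subtype (h : IsInternal A) (C : Submodule R M)
    [Nontrivial C] : {i | Function.Injective (h.proj i ∘ₗ C.subtype)}.Finite := by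
  obtain ⟨x, hx⟩ := exists_ne (0 : C)
  obtain ⟨s, hs, -⟩ := h.exists_finset_sum_proj x
  refine s.finite_toSet.subset fun i hi ↦ by_contra fun his ↦ hx (hi ?_)
  simpa using hs i his

theorem map_linearEquiv (h : IsInternal A) {N : Type*} [AddCommGroup N] [Module R N]
    (e : M ≃ₗ[R] N) : IsInternal fun i ↦ (A i).map (e : M →ₗ[R] N) := by
  rw [isInternal_submodule_iff_iSupIndep_and_iSup_eq_top] at h ⊢
  refine ⟨(iSupIndep_map_orderIso_iff (Submodule.orderIsoMapComap e)).2 h.1, ?_⟩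
  rw [← Submodule.map_iSup, h.2, Submodule.map_top, LinearEquiv.range]

theorem exists_isInternal_of_isCompl_biSup (h : IsInternal A) (s : Set ι) {X P : Submodule R M}
    (hQ : IsCompl X (⨆ i ∈ s, A i)) (hP : IsCompl X P) :
    ∃ A' : s → Submodule R P, IsInternal A' ∧ ∀ i, Nonempty (A' i ≃ₗ[R] A i) := by
  set Q := ⨆ i ∈ s, A i
  let ψ : Q ≃ₗ[R] P :=
    (Submodule.quotientEquivOfIsCompl X Q hQ).symm.trans (Submodule.quotientEquivOfIsCompl X P hP)
  have hQA := isInternal_biSup_submodule_of_iSupIndep s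
    (h.submodule_iSupIndep.comp Subtype.val_injective)
  refine ⟨fun i ↦ ((A i).comap Q.subtype).map (ψ : Q →ₗ[R] P), hQA.map_linearEquiv ψ,
    fun i ↦ ⟨?_⟩⟩
  exact (Submodule.equivMapOfInjective _ ψ.injective _).symm.trans
    (Submodule.comapSubtypeEquivOfLe (le_biSup A i.2))

theorem exists_isUnit_comp_proj (h : IsInternal A) {B : Submodule R M}
    [IsLocalRing (Module.End R B)] (π : M →ₗ[R] B) (hπ : ∀ b : B, π b = b) :
    ∃ i, IsUnit ((π ∘ₗ (A i).subtype) ∘ₗ (h.proj i ∘ₗ B.subtype) : Module.End R B) := by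
  have := Module.nontrivial_of_isLocalRing_end R (N := B)
  obtain ⟨b, hb⟩ := exists_ne (0 : B)
  obtain ⟨s, -, hs⟩ := h.exists_finset_sum_proj (b : M)
  set F : Module.End R B := ∑ i ∈ s, (π ∘ₗ (A i).subtype) ∘ₗ (h.proj i ∘ₗ B.subtype)
  have hFb : F b = b := by simp [F, ← map_sum, hs, hπ]
  have h1F : ¬ IsUnit (1 - F) := fun hu ↦
    hb (((Module.End.isUnit_iff _).1 hu).injective (by simp [hFb]))
  have hF : IsUnit F := (IsLocalRing.isUnit_or_isUnit_of_isUnit_add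
    (by simp : IsUnit (F + (1 - F)))).resolve_right h1F
  obtain ⟨i, -, hi⟩ := IsLocalRing.exists_of_isUnit_sum hF
  exact ⟨i, hi⟩

theorem exists_bijective_comp_subtype (h : IsInternal A)
    (hloc : ∀ i, IsLocalRing (Module.End R (A i))) {B : Submodule R M}
    [IsLocalRing (Module.End R B)] (π : M →ₗ[R] B) (hπ : ∀ b : B, π b = b) :
    ∃ i, Function.Bijective (π ∘ₗ (A i).subtype) := by
  have := Module.nontrivial_of_isLocalRing_end R (N := B)
  obtain ⟨i, hi⟩ := h.exists_isUnit_comp_proj π hπ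
  have := hloc i
  exact ⟨i, bijective_of_isUnit_comp hi⟩

end DirectSum.IsInternal

def isoIndices {M ι : Type*} [AddCommGroup M] [Module R M] (F : ι → Submodule R M) (N : Type*)
    [AddCommGroup N] [Module R N] : Set ι :=
  {i | Nonempty (F i ≃ₗ[R] N)}

section isoIndices

variable {M : Type*} [AddCommGroup M] [Module R M] {N : Type*} [AddCommGroup N] [Module R N]

theorem encard_isoIndices_add_one {M' ι : Type*} [AddCommGroup M'] [Module R M']
    {F : ι → Submodule R M} {a : ι} {G : ({a}ᶜ : Set ι) → Submodule R M'}
    (e : ∀ i, Nonempty (G i ≃ₗ[R] F i)) (ha : a ∈ isoIndices F N) :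
    (isoIndices G N).encard + 1 = (isoIndices F N).encard := by
  have : Subtype.val '' isoIndices G N = isoIndices F N \ {a} := by
    ext i
    constructor
    · rintro ⟨i, ⟨f⟩, rfl⟩
      exact ⟨⟨(e i).some.symm.trans f⟩, i.2⟩
    · rintro ⟨⟨f⟩, hi⟩
      exact ⟨⟨i, hi⟩, ⟨(e ⟨i, hi⟩).some.trans f⟩, rfl⟩
  rw [← Subtype.val_injective.encard_image, this, Set.encard_sdiff_singleton_add_one ha]

theorem encard_isoIndices_eq_of_encard_eq {ι κ : Type*} [DecidableEq ι] [DecidableEq κ]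
    {S : ι → Submodule R M} {T : κ → Submodule R M} (hS : IsInternal S) (hT : IsInternal T)
    (hSloc : ∀ i, IsLocalRing (Module.End R (S i)))
    (hTloc : ∀ j, IsLocalRing (Module.End R (T j))) {n : ℕ}
    (hn : (isoIndices T N).encard = n) : (isoIndices S N).encard = n := by
  induction n generalizing M ι κ with
  | zero =>
    refine Set.encard_eq_zero.2 (Set.eq_empty_of_forall_notMem fun i ⟨f⟩ ↦ ?_)
    have := hSloc i
    obtain ⟨j, hj⟩ :=
      hT.exists_bijective_comp_subtype hTloc (hS.proj i) fun x ↦ hS.proj_apply_of_mem x.2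
    exact (Set.encard_eq_zero.1 hn).subset ⟨(LinearEquiv.ofBijective _ hj).trans f⟩
  | succ n ih =>
    rw [Nat.cast_succ] at hn ⊢
    obtain ⟨j₀, hj₀⟩ : (isoIndices T N).Nonempty :=
      Set.nonempty_of_encard_ne_zero (by simp [hn])
    have := hTloc j₀
    obtain ⟨i₀, hi₀⟩ :=
      hS.exists_bijective_comp_subtype hSloc (hT.proj j₀) fun x ↦ hT.proj_apply_of_mem x.2
    have hQ := isCompl_ker_of_bijective_comp_subtype _ hi₀
    have hP := hS.isCompl_ker_proj i₀
    rw [hT.ker_proj] at hQ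
    rw [hS.ker_proj] at hP
    -- `S i₀` is complemented both by the other `S`'s and by the other `T`'s, so the span `P` of
    -- the other `S`'s inherits a second decomposition, isomorphic to the other `T`'s.
    obtain ⟨S', hS', eS⟩ := hS.exists_isInternal_of_isCompl_biSup _ hP hP
    obtain ⟨T', hT', eT⟩ := hT.exists_isInternal_of_isCompl_biSup _ hQ hP
    have hT'n : (isoIndices T' N).encard = n := by
      have := encard_isoIndices_add_one eT hj₀
      rw [hn] at this
      exact ENat.add_left_injective_of_ne_top ENat.one_ne_top this
    have hS'n := ih hS' hT' (fun i ↦ have := hSloc i; (eS i).some.symm.isLocalRing_end)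
      (fun j ↦ have := hTloc j; (eT j).some.symm.isLocalRing_end) hT'n
    have hi₀N : i₀ ∈ isoIndices S N := ⟨(LinearEquiv.ofBijective _ hi₀).trans hj₀.some⟩
    rw [← encard_isoIndices_add_one eS hi₀N, hS'n]

theorem lift_mk_isoIndices_le {ι : Type u} {κ : Type v} [DecidableEq ι] [DecidableEq κ]
    {S : ι → Submodule R M} {T : κ → Submodule R M} (hS : IsInternal S) (hT : IsInternal T)
    (hSloc : ∀ i, IsLocalRing (Module.End R (S i)))
    (hTloc : ∀ j, IsLocalRing (Module.End R (T j))) :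
    lift.{v} #(isoIndices S N) ≤ lift.{u} #(isoIndices T N) * ℵ₀ := by
  have hmatch (i : isoIndices S N) : ∃ j, Function.Bijective (hS.proj i ∘ₗ (T j).subtype) :=
    have := hSloc i
    hT.exists_bijective_comp_subtype hTloc _ fun x ↦ hS.proj_apply_of_mem x.2
  choose f hf using hmatch
  refine lift_mk_le_lift_mk_mul_of_lift_mk_preimage_le
    (fun i ↦ ⟨f i, ⟨(LinearEquiv.ofBijective _ (hf i)).trans i.2.some⟩⟩) fun j ↦ ?_
  have := hTloc j
  have := Module.nontrivial_of_isLocalRing_end R (N := T j)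
  refine lift_le_aleph0.2 (Set.Countable.le_aleph0 ?_)
  refine ((hS.finite_setOf_injective_proj_comp_subtype (T j)).preimage
    Subtype.val_injective.injOn).countable.mono ?_
  rintro i rfl
  exact (hf i).injective

theorem nonempty_equiv_isoIndices {ι : Type u} {κ : Type v} [DecidableEq ι] [DecidableEq κ]
    {S : ι → Submodule R M} {T : κ → Submodule R M} (hS : IsInternal S) (hT : IsInternal T)
    (hSloc : ∀ i, IsLocalRing (Module.End R (S i)))
    (hTloc : ∀ j, IsLocalRing (Module.End R (T j))) :
    Nonempty (isoIndices S N ≃ isoIndices T N) := by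
  rcases (isoIndices T N).finite_or_infinite with hK | hK
  · have hIK := encard_isoIndices_eq_of_encard_eq hS hT hSloc hTloc hK.encard_eq_coe
    have := (Set.finite_of_encard_eq_coe hIK).to_subtype
    have := hK.to_subtype
    rw [← hK.encard_eq_coe] at hIK
    exact Finite.card_eq.1 (by
      rw [Nat.card_coe_set_eq, Nat.card_coe_set_eq, Set.ncard_def, Set.ncard_def, hIK])
  · have hI : (isoIndices S N).Infinite := fun hI ↦ hK (Set.finite_of_encard_eq_coe
      (encard_isoIndices_eq_of_encard_eq hT hS hTloc hSloc hI.encard_eq_coe))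
    have := hI.to_subtype
    have := hK.to_subtype
    refine lift_mk_eq'.1 (le_antisymm ?_ ?_)
    · calc _ ≤ _ := lift_mk_isoIndices_le hS hT hSloc hTloc
        _ = _ := mul_aleph0_eq (aleph0_le_lift.2 (aleph0_le_mk _))
    · calc _ ≤ _ := lift_mk_isoIndices_le hT hS hTloc hSloc
        _ = _ := mul_aleph0_eq (aleph0_le_lift.2 (aleph0_le_mk _))

end isoIndices

end

theorem Setoid.exists_equiv_of_forall_nonempty_equiv {α ι κ : Type*} (r : Setoid α)
    (f : ι → α) (g : κ → α) (h : ∀ a, Nonempty ({i | r (f i) a} ≃ {j | r (g j) a})) :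
    ∃ e : ι ≃ κ, ∀ i, r (f i) (g (e i)) := by
  have fiber (c : Quotient r) : {i // Quotient.mk r (f i) = c} ≃ {j // Quotient.mk r (g j) = c} :=
    (Equiv.subtypeEquivRight fun _ ↦ Quotient.mk_eq_iff_out).trans <|
      (h c.out).some.trans (Equiv.subtypeEquivRight fun _ ↦ Quotient.mk_eq_iff_out).symm
  exact ⟨Equiv.ofFiberEquiv fiber,
    fun i ↦ Quotient.exact (Equiv.ofFiberEquiv_map fiber i).symm⟩

def Submodule.isoSetoid (R M : Type*) [Ring R] [AddCommGroup M] [Module R M] :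
    Setoid (Submodule R M) where
  r p q := Nonempty (p ≃ₗ[R] q)
  iseqv := ⟨fun p ↦ ⟨.refl R p⟩, fun ⟨e⟩ ↦ ⟨e.symm⟩, fun ⟨e⟩ ⟨e'⟩ ↦ ⟨e.trans e'⟩⟩

/-- **Krull–Schmidt–Remak–Azumaya.** If a module `M` decomposes as an internal
direct sum of submodules each of whose endomorphism ring is local, then any two such
decompositions are equivalent: there is a bijection of index sets matching isomorphic summands. -/
theorem krull_schmidt_remak_azumaya
    {R : Type*} [Ring R] {M : Type*} [AddCommGroup M] [Module R M]
    {ι κ : Type*} [DecidableEq ι] [DecidableEq κ] (S : ι → Submodule R M) (T : κ → Submodule R M)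
    (hS : DirectSum.IsInternal S) (hT : DirectSum.IsInternal T)
    (hSloc : ∀ i, IsLocalRing (Module.End R (S i)))
    (hTloc : ∀ j, IsLocalRing (Module.End R (T j))) :
    ∃ e : ι ≃ κ, ∀ i, Nonempty ((S i) ≃ₗ[R] (T (e i))) :=
  (Submodule.isoSetoid R M).exists_equiv_of_forall_nonempty_equiv S T fun _ ↦
    nonempty_equiv_isoIndices hS hT hSloc hTloc
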